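/- Let G be a nontrivial connected prism fixer with γ(G) = m ≥ 4. If G does not contain an even symmetric γ-set, then G is not a universal fixer. -/

import Mathlib

open SimpleGraph

variable {V : Type*}

/-- `A` dominates `B`: every vertex of `B` is in the closed neighborhood of some vertex of `A`. -/
def Dominates (G : SimpleGraph V) (A B : Set V) : Prop :=
  ∀ b ∈ B, ∃ a ∈ A, a = b ∨ G.Adj a b

/-- `D` is a dominating set of `G`. -/
def IsDomSet (G : SimpleGraph V) (D : Set V) : Prop :=
  Dominates G D Set.univ

/-- The domination number of `G`. -/
noncomputable def domNum (G : SimpleGraph V) : ℕ :=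
  sInf {n | ∃ D : Set V, IsDomSet G D ∧ D.ncard = n}

/-- The prism of `G` with respect to a permutation `π`: two disjoint copies of `G`
joined by the perfect matching `u – π u`. -/
def prism (G : SimpleGraph V) (π : Equiv.Perm V) : SimpleGraph (V ⊕ V) :=
  SimpleGraph.fromRel (fun a b =>
    match a, b with
    | Sum.inl u, Sum.inl v => G.Adj u v
    | Sum.inr u, Sum.inr v => G.Adj u v
    | Sum.inl u, Sum.inr v => v = π u
    | Sum.inr _, Sum.inl _ => False)

/-- `G` is a universal fixer. -/
def IsUniversalFixer (G : SimpleGraph V) : Prop :=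
  ∀ π : Equiv.Perm V, domNum (prism G π) = domNum G

/-- `D` is a γ-set (minimum dominating set) of `G`. -/
def IsGammaSet (G : SimpleGraph V) (D : Set V) : Prop :=
  IsDomSet G D ∧ D.ncard = domNum G

/-- `D = [D₁, D₂]` is a symmetric γ-set of `G`. -/
def IsSymGammaSet (G : SimpleGraph V) (D D1 D2 : Set V) : Prop :=
  IsGammaSet G D ∧ D = D1 ∪ D2 ∧ Disjoint D1 D2 ∧ D1.Nonempty ∧ D2.Nonempty ∧
    Dominates G D1 (Set.univ \ D2) ∧ Dominates G D2 (Set.univ \ D1)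

/-- `S` is a 2-packing: closed neighborhoods of distinct vertices of `S` are disjoint. -/
def IsTwoPacking (G : SimpleGraph V) (S : Set V) : Prop :=
  ∀ x ∈ S, ∀ y ∈ S, x ≠ y →
    Disjoint (insert x (G.neighborSet x)) (insert y (G.neighborSet y))

/-- `D` is an even symmetric γ-set of `G`. -/
def IsEvenSymGammaSet (G : SimpleGraph V) (D : Set V) : Prop :=
  ∃ D1 D2, IsSymGammaSet G D D1 D2 ∧ D1.ncard = D2.ncard


/-!
A minimum dominating set of the prism `πG` has a trace `A` on the first copy and a trace
`π(B)` on the second, where `A` dominates `V ∖ B`, `π(B)` dominates `V ∖ π(A)` and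
`|A| + |B| = γ(G)` (`IsGammaSplit`). For `π = id` this gives a symmetric γ-set `[X, Y]`, which
is uneven, say `|X| < |Y|`. Minimality makes the vertices of `Y` pairwise nonadjacent, with
no common neighbours and no neighbours in `X`.

Let `π` be a cyclic permutation that goes from a neighbour `w ∉ X ∪ Y` of some `y ∈ Y` to `y`,
then through all of `Y` and back to `w`, fixing every other vertex. For a pair `(A, B)` as
above: if `π w ∉ A ∪ B`, being outside `A ∪ B` propagates all the way around the cycle, and
then `A ∪ X` and `π(B) ∪ X` dominate `G` although `|A| + |B| + 2|X| < 2γ(G)`. If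
`π w ∈ A ∪ B`, then `π⁻¹ w ∈ B`, yet being outside `B` propagates from `w` all the way around
the cycle.
-/

open Set

section Domination

variable {G : SimpleGraph V}

lemma domNum_le_ncard {D : Set V} (hD : IsDomSet G D) : domNum G ≤ D.ncard :=
  Nat.sInf_le ⟨D, hD, rfl⟩

lemma exists_isGammaSet (G : SimpleGraph V) : ∃ D, IsGammaSet G D :=
  Nat.sInf_mem (s := {n | ∃ D : Set V, IsDomSet G D ∧ D.ncard = n})
    ⟨_, univ, fun v _ => ⟨v, mem_univ v, Or.inl rfl⟩, rfl⟩

lemma isDomSet_union_of_disjoint {A B X Y : Set V} (hAB : Dominates G A Bᶜ)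
    (hXY : Dominates G X Yᶜ) (hBY : Disjoint B Y) : IsDomSet G (A ∪ X) := by
  intro v _
  by_cases hvB : v ∈ B
  · obtain ⟨x, hx, hxv⟩ := hXY v (hBY.notMem_of_mem_left hvB)
    exact ⟨x, Or.inr hx, hxv⟩
  · obtain ⟨a, ha, hav⟩ := hAB v hvB
    exact ⟨a, Or.inl ha, hav⟩

end Domination

def IsGammaSplit (G : SimpleGraph V) (A B : Set V) : Prop :=
  Dominates G A Bᶜ ∧ A.ncard + B.ncard ≤ domNum G

namespace IsGammaSplit

variable {G : SimpleGraph V} {A B : Set V}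

lemma isDomSet_union (h : IsGammaSplit G A B) : IsDomSet G (A ∪ B) := by
  intro v _
  by_cases hv : v ∈ B
  · exact ⟨v, Or.inr hv, Or.inl rfl⟩
  · obtain ⟨a, ha, hav⟩ := h.1 v hv
    exact ⟨a, Or.inl ha, hav⟩

lemma exists_adj {v : V} (h : IsGammaSplit G A B) (hv : v ∉ A ∪ B) :
    ∃ a ∈ A, G.Adj a v := by
  obtain ⟨a, ha, rfl | hav⟩ := h.1 v fun hvB => hv (Or.inr hvB)
  · exact absurd (Or.inl ha) hv
  · exact ⟨a, ha, hav⟩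

lemma ncard_union (h : IsGammaSplit G A B) : (A ∪ B).ncard = domNum G :=
  ((ncard_union_le A B).trans h.2).antisymm (domNum_le_ncard h.isDomSet_union)

lemma domNum_lt_ncard_add_ncard {X Y A' B' : Set V}
    (hXY : IsGammaSplit G X Y) (hlt : X.ncard < Y.ncard) (hAB : Dominates G A Bᶜ)
    (hA'B' : Dominates G A' B'ᶜ) (hBY : Disjoint B Y) (hB'Y : Disjoint B' Y) :
    domNum G < A.ncard + A'.ncard := by
  have h := (domNum_le_ncard (isDomSet_union_of_disjoint hAB hXY.1 hBY)).trans
    (ncard_union_le A X)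
  have h' := (domNum_le_ncard (isDomSet_union_of_disjoint hA'B' hXY.1 hB'Y)).trans
    (ncard_union_le A' X)
  have := hXY.2
  omega

variable [Finite V]

lemma disjoint (h : IsGammaSplit G A B) : Disjoint A B :=
  (ncard_union_eq_iff).1 <| ((ncard_union_le A B).antisymm (h.ncard_union ▸ h.2))

lemma ncard_le_of_isDomSet (h : IsGammaSplit G A B) {R E : Set V} (hR : R ⊆ B)
    (hD : IsDomSet G (A ∪ (B \ R) ∪ E)) : R.ncard ≤ E.ncard := by
  have hmin := h.2.trans (domNum_le_ncard hD)
  have hD_le := (ncard_union_le _ E).trans (Nat.add_le_add_right (ncard_union_le A (B \ R)) _)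
  have hdiff := ncard_sdiff_add_ncard_of_subset hR
  omega

lemma notMem_union_of_adj {b u : V} (h : IsGammaSplit G A B) (hb : b ∈ B) (hbu : G.Adj b u) :
    u ∉ A ∪ B := by
  intro hu
  refine absurd (h.ncard_le_of_isDomSet (singleton_subset_iff.2 hb) (E := ∅) ?_) (by simp)
  intro v _
  by_cases hvB : v ∈ B
  · by_cases hvb : v = b
    · subst hvb
      refine ⟨u, Or.inl ?_, Or.inr hbu.symm⟩
      rcases hu with hu | hu
      · exact Or.inl hu
      · exact Or.inr ⟨hu, hbu.ne'⟩
    · exact ⟨v, Or.inl (Or.inr ⟨hvB, hvb⟩), Or.inl rfl⟩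
  · obtain ⟨a, ha, hav⟩ := h.1 v hvB
    exact ⟨a, Or.inl (Or.inl ha), hav⟩

lemma eq_of_adj_of_adj {c b₁ b₂ : V} (h : IsGammaSplit G A B) (hb₁ : b₁ ∈ B)
    (hb₂ : b₂ ∈ B) (h₁ : G.Adj c b₁) (h₂ : G.Adj c b₂) : b₁ = b₂ := by
  by_contra hne
  have hR : ({b₁, b₂} : Set V) ⊆ B := insert_subset hb₁ (singleton_subset_iff.2 hb₂)
  refine absurd (h.ncard_le_of_isDomSet hR (E := {c}) ?_) (by simp [ncard_pair hne])
  intro v _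
  by_cases hvB : v ∈ B
  · by_cases hvR : v ∈ ({b₁, b₂} : Set V)
    · refine ⟨c, Or.inr rfl, Or.inr ?_⟩
      rcases hvR with rfl | rfl
      · exact h₁
      · exact h₂
    · exact ⟨v, Or.inl (Or.inr ⟨hvB, hvR⟩), Or.inl rfl⟩
  · obtain ⟨a, ha, hav⟩ := h.1 v hvB
    exact ⟨a, Or.inl (Or.inl ha), hav⟩

lemma nonempty_left {u v : V} (h : IsGammaSplit G A B) (huv : G.Adj u v) : A.Nonempty := by
  rw [nonempty_iff_ne_empty]
  rintro rfl
  have hB : ∀ x, x ∈ B := fun x => by_contra fun hx => by simpa using h.1 x hx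
  exact h.notMem_union_of_adj (hB u) huv (Or.inr (hB v))

lemma isSymGammaSet (h : IsGammaSplit G A B) (h' : IsGammaSplit G B A) (hA : A.Nonempty)
    (hB : B.Nonempty) : IsSymGammaSet G (A ∪ B) A B := by
  refine ⟨⟨h.isDomSet_union, h.ncard_union⟩, rfl, h.disjoint, hA, hB, ?_, ?_⟩ <;>
    rw [← compl_eq_univ_sdiff]
  exacts [h.1, h'.1]

end IsGammaSplit

section Prism

variable {G : SimpleGraph V} {π : Equiv.Perm V} {u v : V}

@[simp] lemma prism_adj_inl_inl : (prism G π).Adj (.inl u) (.inl v) ↔ G.Adj u v := by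
  simpa [prism, G.adj_comm] using G.ne_of_adj

@[simp] lemma prism_adj_inr_inr : (prism G π).Adj (.inr u) (.inr v) ↔ G.Adj u v := by
  simpa [prism, G.adj_comm] using G.ne_of_adj

@[simp] lemma prism_adj_inl_inr : (prism G π).Adj (.inl u) (.inr v) ↔ v = π u := by
  simp [prism]

@[simp] lemma prism_adj_inr_inl : (prism G π).Adj (.inr u) (.inl v) ↔ u = π v := by
  simp [prism]

lemma ncard_preimage_inl_add_ncard_preimage_inr {α β : Type*} [Finite α] [Finite β]
    (s : Set (α ⊕ β)) : (Sum.inl ⁻¹' s).ncard + (Sum.inr ⁻¹' s).ncard = s.ncard := by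
  conv_rhs => rw [← image_preimage_inl_union_image_preimage_inr s]
  rw [ncard_union_eq disjoint_image_inl_image_inr, ncard_image_of_injective _ Sum.inl_injective,
    ncard_image_of_injective _ Sum.inr_injective]

lemma exists_isGammaSplit_of_domNum_prism_le [Finite V] (h : domNum (prism G π) ≤ domNum G) :
    ∃ A B : Set V, IsGammaSplit G A B ∧ IsGammaSplit G (π '' B) (π '' A) := by
  obtain ⟨W, hW, hWcard⟩ := exists_isGammaSet (prism G π)
  refine ⟨Sum.inl ⁻¹' W, π ⁻¹' (Sum.inr ⁻¹' W), ⟨?_, ?_⟩, ⟨?_, ?_⟩⟩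
  · intro v hv
    obtain ⟨_ | b, hb, hbv⟩ := hW (.inl v) (mem_univ _)
    · exact ⟨_, hb, by simpa using hbv⟩
    · simp only [reduceCtorEq, prism_adj_inr_inl, false_or] at hbv
      exact absurd (show π v ∈ Sum.inr ⁻¹' W from hbv ▸ hb) hv
  · rw [ncard_preimage_of_injective_subset_range π.injective (by simp),
      ncard_preimage_inl_add_ncard_preimage_inr, hWcard]
    exact h
  · rw [image_preimage_eq _ π.surjective]
    intro v hv
    obtain ⟨a | _, ha, hav⟩ := hW (.inr v) (mem_univ _)
    · simp only [reduceCtorEq, prism_adj_inl_inr, false_or] at hav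
      exact absurd ⟨a, ha, hav.symm⟩ hv
    · exact ⟨_, ha, by simpa using hav⟩
  · rw [image_preimage_eq _ π.surjective, ncard_image_of_injective _ π.injective, add_comm,
      ncard_preimage_inl_add_ncard_preimage_inr, hWcard]
    exact h

end Prism

lemma exists_isGammaSplit_ncard_lt [Finite V] {G : SimpleGraph V} {u v : V}
    (hpf : domNum (prism G (Equiv.refl V)) ≤ domNum G)
    (hno : ¬ ∃ D : Set V, IsEvenSymGammaSet G D) (huv : G.Adj u v) :
    ∃ X Y : Set V, IsGammaSplit G X Y ∧ X.ncard < Y.ncard := by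
  obtain ⟨X, Y, hXY, hYX⟩ := exists_isGammaSplit_of_domNum_prism_le hpf
  simp only [Equiv.coe_refl, image_id] at hYX
  rcases lt_trichotomy X.ncard Y.ncard with hlt | heq | hgt
  · exact ⟨X, Y, hXY, hlt⟩
  · exact absurd ⟨X ∪ Y, X, Y, hXY.isSymGammaSet hYX (hXY.nonempty_left huv)
      (hYX.nonempty_left huv), heq⟩ hno
  · exact ⟨Y, X, hYX, hgt⟩

lemma Equiv.Perm.IsCycleOn.forall_of_map {α : Type*} {f : Equiv.Perm α} {s : Set α} {a : α}
    {p : α → Prop} (hs : s.Finite) (hf : f.IsCycleOn s) (ha : a ∈ s) (hpa : p a)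
    (hmap : ∀ x ∈ s, p x → p (f x)) : ∀ x ∈ s, p x := by
  have hpow : ∀ n : ℕ, (f ^ n) a ∈ s ∧ p ((f ^ n) a) := by
    intro n
    induction n with
    | zero => exact ⟨ha, hpa⟩
    | succ n ih =>
      rw [pow_succ', Equiv.Perm.mul_apply]
      exact ⟨hf.apply_mem_iff.2 ih.1, hmap _ ih.1 ih.2⟩
  intro x hx
  obtain ⟨n, rfl⟩ := hf.exists_pow_eq' hs ha hx
  exact (hpow n).2

lemma Equiv.Perm.apply_notMem_image_union {π : Equiv.Perm V} {A B : Set V} {v : V}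
    (hv : v ∉ A ∪ B) : π v ∉ π '' B ∪ π '' A := by
  rwa [← image_union, π.injective.mem_set_image, union_comm]

structure IsRotation (G : SimpleGraph V) (Y : Set V) (w : V) (π : Equiv.Perm V) : Prop where
  notMem : w ∉ Y
  apply_mem : π w ∈ Y
  adj_apply : G.Adj (π w) w
  isCycleOn : π.IsCycleOn (insert w Y)
  apply_eq_self : ∀ v ∉ insert w Y, π v = v

lemma exists_isRotation [Finite V] {G : SimpleGraph V} {Y : Set V} {w y : V} (hw : w ∉ Y)
    (hy : y ∈ Y) (hyw : G.Adj y w) : ∃ π, IsRotation G Y w π := by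
  classical
  have := Fintype.ofFinite V
  set l := w :: y :: (Y.toFinset.erase y).toList
  have hl : ∀ v, v ∈ l ↔ v ∈ insert w Y := by
    intro v
    by_cases hv : v = y <;> simp [l, hv, hy]
  have hnodup : l.Nodup := by
    simp only [l, List.nodup_cons, List.mem_cons, Finset.mem_toList, Finset.mem_erase,
      mem_toFinset, not_or, Finset.nodup_toList, and_true]
    exact ⟨⟨hyw.ne', fun h => hw h.2⟩, fun h => h.1 rfl⟩
  have hπw : l.formPerm w = y := List.formPerm_apply_head _ _ _ hnodup
  refine ⟨l.formPerm, hw, hπw ▸ hy, hπw ▸ hyw, ?_, fun v hv =>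
    List.formPerm_apply_of_notMem fun h => hv ((hl v).1 h)⟩
  convert hnodup.isCycleOn_formPerm
  ext v
  exact (hl v).symm

namespace IsRotation

variable {G : SimpleGraph V} {X Y A B : Set V} {w : V} {π : Equiv.Perm V}

lemma apply_eq_self_of_apply_notMem (hπ : IsRotation G Y w π) {v : V}
    (h : π v ∉ insert w Y) : π v = v :=
  hπ.apply_eq_self v fun hv => h (hπ.isCycleOn.apply_mem_iff.2 hv)

lemma apply_mem_of_mem (hπ : IsRotation G Y w π) {v : V} (hv : v ∈ Y) (hne : π v ≠ w) :
    π v ∈ Y :=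
  (hπ.isCycleOn.apply_mem_iff.2 (mem_insert_of_mem w hv)).resolve_left hne

lemma symm_apply_mem (hπ : IsRotation G Y w π) : π.symm w ∈ Y := by
  refine (hπ.isCycleOn.apply_mem_iff.1 (by simp)).resolve_left fun h => hπ.notMem ?_
  rw [← π.apply_symm_apply w, h]
  exact hπ.apply_mem

variable [Finite V]

lemma notMem_left (hπ : IsRotation G Y w π) (hXY : IsGammaSplit G X Y)
    (hAB : IsGammaSplit G A B) (hBA : IsGammaSplit G (π '' B) (π '' A)) : w ∉ A := by
  intro hwA
  have hw := hBA.notMem_union_of_adj (mem_image_of_mem π hwA) hπ.adj_apply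
  obtain ⟨_, ⟨c, hcB, rfl⟩, hcw⟩ := hBA.exists_adj hw
  by_cases hc : π c ∈ insert w Y
  · have hcY : π c ∈ Y := hc.resolve_left hcw.ne
    have hcw : c = w :=
      π.injective (hXY.eq_of_adj_of_adj hcY hπ.apply_mem hcw.symm hπ.adj_apply.symm)
    exact hAB.disjoint.notMem_of_mem_left hwA (hcw ▸ hcB)
  · rw [hπ.apply_eq_self_of_apply_notMem hc] at hcw
    exact hAB.notMem_union_of_adj hcB hcw (Or.inl hwA)

lemma apply_notMem_union_of_notMem_union (hπ : IsRotation G Y w π) (hXY : IsGammaSplit G X Y)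
    (hAB : IsGammaSplit G A B) (hBA : IsGammaSplit G (π '' B) (π '' A)) {v : V}
    (hv : v ∉ A ∪ B) (hvw : v ≠ w) (hπv : π v ∈ Y) : π v ∉ A ∪ B := by
  obtain ⟨_, ⟨c, hcB, rfl⟩, hcv⟩ := hBA.exists_adj (π.apply_notMem_image_union hv)
  have hcY : π c ∉ Y := fun h => hXY.notMem_union_of_adj hπv hcv.symm (Or.inr h)
  have hcw : π c ≠ w := by
    rintro hcw
    rw [hcw] at hcv
    exact hvw (π.injective (hXY.eq_of_adj_of_adj hπv hπ.apply_mem hcv hπ.adj_apply.symm))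
  rw [hπ.apply_eq_self_of_apply_notMem (by simp [hcw, hcY])] at hcv
  exact hAB.notMem_union_of_adj hcB hcv

lemma apply_mem_union (hπ : IsRotation G Y w π) (hXY : IsGammaSplit G X Y)
    (hlt : X.ncard < Y.ncard) (hAB : IsGammaSplit G A B)
    (hBA : IsGammaSplit G (π '' B) (π '' A)) : π w ∈ A ∪ B := by
  by_contra hy
  have hwA := hπ.notMem_left hXY hAB hBA
  have hC : ∀ v ∈ insert w Y, v = w ∨ v ∉ A ∪ B := by
    refine hπ.isCycleOn.forall_of_map (toFinite _) (mem_insert w Y) (Or.inl rfl) ?_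
    intro v hv hpv
    by_cases hvw : v = w
    · exact Or.inr (hvw ▸ hy)
    by_cases hπv : π v = w
    · exact Or.inl hπv
    exact Or.inr (hπ.apply_notMem_union_of_notMem_union hXY hAB hBA (hpv.resolve_left hvw) hvw
      (hπ.apply_mem_of_mem (hv.resolve_left hvw) hπv))
  have hYC : ∀ v ∈ Y, v ∉ A ∪ B := fun v hv =>
    (hC v (Or.inr hv)).resolve_left (ne_of_mem_of_not_mem hv hπ.notMem)
  have hBY : Disjoint B Y := Set.disjoint_left.2 fun v hvB hvY => hYC v hvY (Or.inr hvB)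
  have hAY : Disjoint (π '' A) Y := by
    rw [Set.disjoint_left]
    rintro _ ⟨a, ha, rfl⟩ hπa
    by_cases ha' : a ∈ insert w Y
    · rcases ha' with rfl | haY
      · exact hwA ha
      · exact hYC a haY (Or.inl ha)
    · rw [hπ.apply_eq_self a ha'] at hπa
      exact ha' (Or.inr hπa)
  have := hXY.domNum_lt_ncard_add_ncard hlt hAB.1 hBA.1 hBY hAY
  have := hAB.2
  rw [ncard_image_of_injective _ π.injective] at *
  omega

lemma symm_apply_mem_right (hπ : IsRotation G Y w π) (hXY : IsGammaSplit G X Y)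
    (hAB : IsGammaSplit G A B) (hBA : IsGammaSplit G (π '' B) (π '' A)) (hw : w ∉ A ∪ B)
    (hy : π w ∈ A ∪ B) : π.symm w ∈ B := by
  obtain ⟨_, ⟨c, hcB, rfl⟩, hcy⟩ := hBA.exists_adj (π.apply_notMem_image_union hw)
  have hcY : π c ∉ Y := fun h => hXY.notMem_union_of_adj hπ.apply_mem hcy.symm (Or.inr h)
  by_cases hcw : π c = w
  · rwa [← hcw, π.symm_apply_apply]
  · rw [hπ.apply_eq_self_of_apply_notMem (by simp [hcw, hcY])] at hcy
    exact absurd hy (hAB.notMem_union_of_adj hcB hcy)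

lemma apply_mem_left (hπ : IsRotation G Y w π) (hXY : IsGammaSplit G X Y)
    (hAB : IsGammaSplit G A B) (hBA : IsGammaSplit G (π '' B) (π '' A)) (hw : w ∉ A ∪ B)
    (hsymm : π.symm w ∈ B) : π w ∈ A := by
  obtain ⟨u, huA, huw⟩ := hAB.exists_adj hw
  by_cases hu : u ∈ insert w Y
  · rcases hu with rfl | huY
    · exact absurd (Or.inl huA) hw
    · exact hXY.eq_of_adj_of_adj huY hπ.apply_mem huw.symm hπ.adj_apply.symm ▸ huA
  · rw [← hπ.apply_eq_self u hu, ← π.apply_symm_apply w] at huw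
    exact (hBA.notMem_union_of_adj (mem_image_of_mem π huA) huw
      (Or.inl (mem_image_of_mem π hsymm))).elim

lemma apply_notMem_right_of_mem_left (hπ : IsRotation G Y w π) (hXY : IsGammaSplit G X Y)
    (hAB : IsGammaSplit G A B) (hBA : IsGammaSplit G (π '' B) (π '' A))
    (hdeg : ∀ v, ∃ u, G.Adj v u) (hwA : w ∉ A) {a : V} (ha : a ∈ A)
    (hπa : π a ∈ Y) : π a ∉ B := by
  intro hπaB
  obtain ⟨u₀, h₀⟩ := hdeg (π a)
  have hu₀ : u₀ ∉ A ∪ B := hAB.notMem_union_of_adj hπaB h₀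
  obtain ⟨u, huA, huu₀⟩ := hAB.exists_adj hu₀
  by_cases hu : u ∈ insert w Y
  · rcases hu with rfl | huY
    · exact hwA huA
    · have hu := hXY.eq_of_adj_of_adj huY hπa huu₀.symm h₀.symm
      exact hAB.disjoint.notMem_of_mem_left huA (hu ▸ hπaB)
  · have hπu := hπ.apply_eq_self u hu
    have hua := hBA.eq_of_adj_of_adj (mem_image_of_mem π huA) (mem_image_of_mem π ha)
      (by rw [hπu]; exact huu₀.symm) h₀.symm
    rw [hπu] at hua
    exact hu (Or.inr (hua ▸ hπa))

lemma apply_notMem_union (hπ : IsRotation G Y w π) (hXY : IsGammaSplit G X Y)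
    (hAB : IsGammaSplit G A B) (hBA : IsGammaSplit G (π '' B) (π '' A))
    (hdeg : ∀ v, ∃ u, G.Adj v u) : π w ∉ A ∪ B := by
  intro hy
  have hwA := hπ.notMem_left hXY hAB hBA
  have hwB : w ∉ B := fun hwB => hAB.notMem_union_of_adj hwB hπ.adj_apply.symm hy
  have hw : w ∉ A ∪ B := by rintro (h | h) <;> contradiction
  have hsymm := hπ.symm_apply_mem_right hXY hAB hBA hw hy
  have hyA := hπ.apply_mem_left hXY hAB hBA hw hsymm
  refine hπ.isCycleOn.forall_of_map (p := (· ∉ B)) (toFinite _) (mem_insert w Y) hwB ?_ _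
    (Or.inr hπ.symm_apply_mem) hsymm
  intro v hv hvB
  by_cases hvw : v = w
  · exact hvw ▸ hAB.disjoint.notMem_of_mem_left hyA
  by_cases hπv : π v = w
  · exact hπv ▸ hwB
  have hπvY := hπ.apply_mem_of_mem (hv.resolve_left hvw) hπv
  by_cases hvA : v ∈ A
  · exact hπ.apply_notMem_right_of_mem_left hXY hAB hBA hdeg hwA hvA hπvY
  · have hv' : v ∉ A ∪ B := by rintro (h | h) <;> contradiction
    exact fun h => hπ.apply_notMem_union_of_notMem_union hXY hAB hBA hv' hvw hπvY (Or.inr h)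

lemma not_isGammaSplit (hπ : IsRotation G Y w π) (hXY : IsGammaSplit G X Y)
    (hlt : X.ncard < Y.ncard) (hdeg : ∀ v, ∃ u, G.Adj v u) (hAB : IsGammaSplit G A B) :
    ¬ IsGammaSplit G (π '' B) (π '' A) :=
  fun hBA => hπ.apply_notMem_union hXY hAB hBA hdeg (hπ.apply_mem_union hXY hlt hAB hBA)

end IsRotation

theorem stmt_15_general [Fintype V] (G : SimpleGraph V) (hconn : G.Connected)
    (hn : 1 < Fintype.card V)
    (hpf : domNum (prism G (Equiv.refl V)) = domNum G)
    (hno : ¬ ∃ D : Set V, IsEvenSymGammaSet G D) :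
    ¬ IsUniversalFixer G := by
  intro hUF
  have : Nontrivial V := Fintype.one_lt_card_iff_nontrivial.1 hn
  have hdeg := hconn.preconnected.exists_adj_of_nontrivial
  obtain ⟨u, hu⟩ := hdeg (Classical.arbitrary V)
  obtain ⟨X, Y, hXY, hlt⟩ := exists_isGammaSplit_ncard_lt hpf.le hno hu
  obtain ⟨y, hy⟩ := (ncard_pos (s := Y)).1 (Nat.zero_lt_of_lt hlt)
  obtain ⟨w, hyw⟩ := hdeg y
  have hw : w ∉ Y := fun hw => hXY.notMem_union_of_adj hy hyw (Or.inr hw)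
  obtain ⟨π, hπ⟩ := exists_isRotation hw hy hyw
  obtain ⟨A, B, hAB, hBA⟩ := exists_isGammaSplit_of_domNum_prism_le (hUF π).le
  exact hπ.not_isGammaSplit hXY hlt hdeg hAB hBA

theorem stmt_15 [Fintype V] (G : SimpleGraph V) (hconn : G.Connected)
    (hn : 1 < Fintype.card V)
    (hpf : domNum (prism G (Equiv.refl V)) = domNum G)
    (m : ℕ) (hm : 4 ≤ m) (hγ : domNum G = m)
    (hno : ¬ ∃ D : Set V, IsEvenSymGammaSet G D) :
    ¬ IsUniversalFixer G :=
  stmt_15_general G hconn hn hpf hno
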